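/- The operators G^(2)_{kl} form a system of matrix units: for all i, j, k, l ∈ {S,A}, G^(2)_{ij} G^(2)_{kl} = δ_{jk} G^(2)_{il}. -/

import Mathlib

/-! `V^(2)` is the rank-one operator `|Φ⟩⟨Φ|` built on the unnormalised maximally entangled
vector `Φ = vec 1`, and `⟨Φ|M ⊗ 1|Φ⟩ = Tr M`. Hence `Q^(2)` compresses each `E_j ⊗ 1` to a
multiple of itself, `Q^(2) (E_j ⊗ 1) Q^(2) = (m_j / d²) Q^(2)`. Together with the orthogonality
`E_j E_k = δ_{jk} E_j` this is all that is needed: for orthogonal idempotents `e_j` and an element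
`q` with `q e_j q = (m_j / s) q`, the elements `(s / √(m_i m_j)) e_i q e_j` are matrix units. -/

open Matrix Kronecker

namespace WBA

/-- Configurations of `p` qudits of local dimension `d`. -/
abbrev Conf (d p : ℕ) := Fin p → Fin d

/-- Operators on `H = (ℂ^d)^{⊗ 2p}`, indexed by pairs (unprimed configuration, primed
configuration). -/
abbrev Op (d p : ℕ) := Matrix (Conf d p × Conf d p) (Conf d p × Conf d p) ℂ

/-- The projector `P⁺_{a,c'}` onto the maximally entangled state between unprimed system `a`
and primed system `c`, tensored with the identity elsewhere. -/
noncomputable def Pplus (d p : ℕ) (a c : Fin p) : Op d p :=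
  Matrix.of fun xy uv =>
    if xy.1 a = xy.2 c ∧ uv.1 a = uv.2 c ∧ (∀ j, j ≠ a → xy.1 j = uv.1 j) ∧
        (∀ j, j ≠ c → xy.2 j = uv.2 j) then
      (d : ℂ)⁻¹
    else 0

/-- `d • P⁺_{a,c'}`, i.e. the partially transposed swap `V^{t_{c'}}_{(a,c')}`. -/
noncomputable def arc (d p : ℕ) (a c : Fin p) : Op d p := (d : ℂ) • Pplus d p a c

/-- `V^(k) = ∏_{j=p-k+1}^{p} (d • P⁺_{j,j'})` (product over the last `k` systems;
`V^(0) = 1`). -/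
noncomputable def Vop (d p k : ℕ) : Op d p :=
  (((List.range p).filter (fun j => decide (p - k ≤ j))).map
    (fun j => if h : j < p then arc d p ⟨j, h⟩ ⟨j, h⟩ else 1)).prod

/-- `Q^(p) = d^{-p} V^(p)` and `Q^(k) = d^{-k} V^(k) - d^{-(k+1)} V^(k+1)` for `k < p`. -/
noncomputable def Qop (d p k : ℕ) : Op d p :=
  if k = p then ((d : ℂ) ^ p)⁻¹ • Vop d p p
  else ((d : ℂ) ^ k)⁻¹ • Vop d p k - ((d : ℂ) ^ (k + 1))⁻¹ • Vop d p (k + 1)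

/-- Permutation matrix on `(ℂ^d)^{⊗ n}`: sends `e_v` to `e_{v ∘ σ⁻¹}`. -/
noncomputable def permMat (d n : ℕ) (σ : Equiv.Perm (Fin n)) :
    Matrix (Fin n → Fin d) (Fin n → Fin d) ℂ :=
  Matrix.of fun x u => if x = u ∘ ⇑σ⁻¹ then 1 else 0

/-- `V_σ`: permutation of the unprimed factors, identity on the primed factors. -/
noncomputable def VL (d p : ℕ) (σ : Equiv.Perm (Fin p)) : Op d p :=
  (permMat d p σ) ⊗ₖ (1 : Matrix (Conf d p) (Conf d p) ℂ)

/-- `V'_τ`: permutation of the primed factors, identity on the unprimed factors. -/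
noncomputable def VR (d p : ℕ) (τ : Equiv.Perm (Fin p)) : Op d p :=
  (1 : Matrix (Conf d p) (Conf d p) ℂ) ⊗ₖ (permMat d p τ)

/-- Identification of `H` with `(ℂ^d)^{⊗ (p+p)}`. -/
def glue (d p : ℕ) : (Conf d p × Conf d p) ≃ (Fin (p + p) → Fin d) :=
  (Equiv.sumArrowEquivProdArrow (Fin p) (Fin p) (Fin d)).symm.trans
    (Equiv.arrowCongr finSumFinEquiv (Equiv.refl (Fin d)))

/-- The permutation operator `W_π`, `π ∈ S_{2p}`, permuting all `2p` tensor factors of `H`. -/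
noncomputable def Wfull (d p : ℕ) (π : Equiv.Perm (Fin (p + p))) : Op d p :=
  (permMat d (p + p) π).submatrix (glue d p) (glue d p)

/-- Partial transpose over the `p` primed factors:
`⟨x,y|M^Γ|u,v⟩ = ⟨x,v|M|u,y⟩`. -/
noncomputable def ptrans (d p : ℕ) (M : Op d p) : Op d p :=
  Matrix.of fun xy uv => M (xy.1, uv.2) (uv.1, xy.2)

/-- The algebra `A^d_{p,p}` of partially transposed permutation operators, as a
linear subspace of `End(H)`. -/
noncomputable def Apt (d p : ℕ) : Submodule ℂ (Op d p) :=
  Submodule.span ℂ {M | ∃ π : Equiv.Perm (Fin (p + p)), M = ptrans d p (Wfull d p π)}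

/-- Extension of an operator on systems `1,…,p-r,1',…,(p-r)'` by the identity on the
remaining systems. -/
noncomputable def embed (d p r : ℕ) (M : Op d (p - r)) : Op d p :=
  Matrix.of fun xy uv =>
    M (xy.1 ∘ Fin.castLE (Nat.sub_le p r), xy.2 ∘ Fin.castLE (Nat.sub_le p r))
      (uv.1 ∘ Fin.castLE (Nat.sub_le p r), uv.2 ∘ Fin.castLE (Nat.sub_le p r)) *
    (if ∀ j : Fin p, p - r ≤ (j : ℕ) → xy.1 j = uv.1 j ∧ xy.2 j = uv.2 j then 1 else 0)

/-- The ideal `M̃^(k) = span{ V_σ V'_τ Q^(k) V_π V'_ρ }` of `A^d_{p,p}`. -/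
noncomputable def Mtil (d p k : ℕ) : Submodule ℂ (Op d p) :=
  Submodule.span ℂ {M | ∃ σ τ π ρ : Equiv.Perm (Fin p),
    M = VL d p σ * VR d p τ * Qop d p k * (VL d p π * VR d p ρ)}

/-- Labels for the two irreps of `S_2`: symmetric `S` and antisymmetric `A`. -/
inductive SA
  | S
  | A
deriving DecidableEq

instance : Fintype SA :=
  ⟨{SA.S, SA.A}, fun x => by cases x <;> simp⟩

/-- The swap operator on `ℂ^d ⊗ ℂ^d`. -/
noncomputable def Fsw (d : ℕ) : Matrix (Conf d 2) (Conf d 2) ℂ :=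
  Matrix.of fun x u => if x 0 = u 1 ∧ x 1 = u 0 then 1 else 0

/-- Symmetric and antisymmetric projectors on `ℂ^d ⊗ ℂ^d`. -/
noncomputable def Esm (d : ℕ) : SA → Matrix (Conf d 2) (Conf d 2) ℂ
  | SA.S => (2 : ℂ)⁻¹ • (1 + Fsw d)
  | SA.A => (2 : ℂ)⁻¹ • (1 - Fsw d)

/-- `E_i ⊗ E_j` on `H = (ℂ^d)^{⊗4}`. -/
noncomputable def EE (d : ℕ) (i j : SA) : Op d 2 := (Esm d i) ⊗ₖ (Esm d j)

/-- `E_i ⊗ 1` on `H = (ℂ^d)^{⊗4}`. -/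
noncomputable def EId (d : ℕ) (i : SA) : Op d 2 :=
  (Esm d i) ⊗ₖ (1 : Matrix (Conf d 2) (Conf d 2) ℂ)

/-- Multiplicities `m_S = d(d+1)/2`, `m_A = d(d-1)/2` (real valued). -/
noncomputable def mR (d : ℕ) : SA → ℝ
  | SA.S => (d : ℝ) * ((d : ℝ) + 1) / 2
  | SA.A => (d : ℝ) * ((d : ℝ) - 1) / 2

/-- Multiplicities `m_S = d(d+1)/2`, `m_A = d(d-1)/2` (complex valued). -/
noncomputable def mC (d : ℕ) : SA → ℂ
  | SA.S => (d : ℂ) * ((d : ℂ) + 1) / 2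
  | SA.A => (d : ℂ) * ((d : ℂ) - 1) / 2

/-- `V^(1) = d • P⁺_{2,2'}` for `p = 2`. -/
noncomputable def V1 (d : ℕ) : Op d 2 := arc d 2 1 1

/-- `V^(2) = d² • P⁺_{2,2'} P⁺_{1,1'}` for `p = 2`. -/
noncomputable def V2 (d : ℕ) : Op d 2 := arc d 2 1 1 * arc d 2 0 0

/-- `Q^(2) = d^{-2} V^(2)` for `p = 2`. -/
noncomputable def Q2 (d : ℕ) : Op d 2 := ((d : ℂ) ^ 2)⁻¹ • V2 d

/-- `Q^(1) = d^{-1} V^(1) - d^{-2} V^(2)` for `p = 2`. -/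
noncomputable def Q1 (d : ℕ) : Op d 2 :=
  (d : ℂ)⁻¹ • V1 d - ((d : ℂ) ^ 2)⁻¹ • V2 d

/-- `G^(2)_{kl} = (d²/√(m_k m_l)) (E_k ⊗ 1) Q^(2) (E_l ⊗ 1)`. -/
noncomputable def G2 (d : ℕ) (k l : SA) : Op d 2 :=
  ((d : ℂ) ^ 2 / ((Real.sqrt (mR d k * mR d l) : ℝ) : ℂ)) • (EId d k * Q2 d * EId d l)

/-- `G^(2) = G^(2)_{SS} + G^(2)_{AA}`. -/
noncomputable def G2sum (d : ℕ) : Op d 2 := G2 d SA.S SA.S + G2 d SA.A SA.A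

/-- The Gram coefficients `b_{SS} = (d+2)/(4d)`, `b_{SA} = b_{AS} = 1/4`,
`b_{AA} = (d-2)/(4d)`. -/
noncomputable def bc (d : ℕ) : SA → SA → ℂ
  | SA.S, SA.S => ((d : ℂ) + 2) / (4 * (d : ℂ))
  | SA.S, SA.A => 1 / 4
  | SA.A, SA.S => 1 / 4
  | SA.A, SA.A => ((d : ℂ) - 2) / (4 * (d : ℂ))

/-- `Ĝ^(1)_{[ij][kl]} = (E_i ⊗ E_j) Q^(1) (E_k ⊗ E_l)`. -/
noncomputable def Ghat1 (d : ℕ) (i j k l : SA) : Op d 2 :=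
  EE d i j * Q1 d * EE d k l

/-- `G^(1)_{[ij][kl]} = b_{ij}⁻¹ Ĝ^(1)_{[ij][kl]}`. -/
noncomputable def G1 (d : ℕ) (i j k l : SA) : Op d 2 := (bc d i j)⁻¹ • Ghat1 d i j k l

/-- `G^(1) = Σ_{ij} G^(1)_{[ij][ij]}`. -/
noncomputable def G1sum (d : ℕ) : Op d 2 := ∑ i : SA, ∑ j : SA, G1 d i j i j

/-- `G^(0)_{ij} = E_i⊗E_j - b_{ij}⁻¹ (E_i⊗E_j)Q^(1)(E_i⊗E_j)
- δ_{ij} (d²/m_i) (E_i⊗1)Q^(2)(E_i⊗1)`. -/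
noncomputable def G0 (d : ℕ) (i j : SA) : Op d 2 :=
  EE d i j - (bc d i j)⁻¹ • (EE d i j * Q1 d * EE d i j) -
    (if i = j then (d : ℂ) ^ 2 / mC d i else 0) • (EId d i * Q2 d * EId d i)

theorem matrixUnits_of_compression {A ι : Type*} [Ring A] [Algebra ℂ A] [DecidableEq ι]
    (e : ι → A) (q : A) (s : ℂ) (m : ι → ℝ) (hs : s ≠ 0) (hm : ∀ i, 0 < m i)
    (he : ∀ j k, e j * e k = if j = k then e j else 0)
    (hq : ∀ j, q * e j * q = ((m j : ℂ) / s) • q) (i j k l : ι) :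
    (s / ((√(m i * m j) : ℝ) : ℂ)) • (e i * q * e j) *
        (s / ((√(m k * m l) : ℝ) : ℂ)) • (e k * q * e l) =
      if j = k then (s / ((√(m i * m l) : ℝ) : ℂ)) • (e i * q * e l) else 0 := by
  have hsandwich : e i * q * e j * (e k * q * e l) = e i * (q * (e j * e k) * q) * e l := by
    simp only [mul_assoc]
  rw [smul_mul_smul, hsandwich, he]
  split_ifs with hjk
  · subst hjk
    have hsqrt : √(m i * m j) * √(m j * m l) = m j * √(m i * m l) := by
      rw [← Real.sqrt_mul (mul_pos (hm i) (hm j)).le,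
        show m i * m j * (m j * m l) = m j ^ 2 * (m i * m l) by ring,
        Real.sqrt_mul (sq_nonneg _), Real.sqrt_sq (hm j).le]
    have hmj : (m j : ℂ) ≠ 0 := by exact_mod_cast (hm j).ne'
    rw [hq, mul_smul_comm, smul_mul_assoc, smul_smul]
    congr 1
    rw [div_mul_div_comm, ← Complex.ofReal_mul, hsqrt, Complex.ofReal_mul]
    field_simp
  · simp

theorem vecMulVec_mul_mul_vecMulVec {n : Type*} [Fintype n] (u v : n → ℂ) (X : Matrix n n ℂ) :
    vecMulVec u v * X * vecMulVec u v = (v ⬝ᵥ X *ᵥ u) • vecMulVec u v := by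
  rw [vecMulVec_mul, vecMulVec_mul_vecMulVec, vecMulVec_smul, dotProduct_mulVec]

theorem vec_one_dotProduct_kronecker_one_mulVec {n : Type*} [Fintype n] [DecidableEq n]
    (M : Matrix n n ℂ) :
    vec (1 : Matrix n n ℂ) ⬝ᵥ (M ⊗ₖ (1 : Matrix n n ℂ)) *ᵥ vec 1 = M.trace := by
  rw [kronecker_mulVec_vec, vec_dotProduct_vec, Matrix.mul_one, Matrix.one_mul, transpose_one,
    Matrix.one_mul, trace_transpose]

theorem sum_conf_two {M : Type*} [AddCommMonoid M] (d : ℕ) (f : Conf d 2 → M) :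
    ∑ w, f w = ∑ a, ∑ b, f ![a, b] := by
  rw [← (piFinTwoEquiv fun _ => Fin d).symm.sum_comp, Fintype.sum_prod_type]
  rfl

theorem conf_two_ext_iff {d : ℕ} {x u : Conf d 2} : x = u ↔ x 0 = u 0 ∧ x 1 = u 1 := by
  rw [funext_iff, Fin.forall_fin_two]

theorem V2_eq_vecMulVec (d : ℕ) (hd : (d : ℂ) ≠ 0) :
    V2 d = vecMulVec (vec 1) (vec 1) := by
  ext ⟨x, y⟩ ⟨u, v⟩
  simp only [V2, arc, Pplus, mul_apply, Matrix.smul_apply, Matrix.of_apply, smul_eq_mul,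
    Fintype.sum_prod_type, Fin.forall_fin_two, vecMulVec_apply, vec, Matrix.one_apply,
    sum_conf_two, conf_two_ext_iff]
  simp [hd, ite_and, and_comm, eq_comm]

theorem Fsw_mul_self (d : ℕ) : Fsw d * Fsw d = 1 := by
  ext x u
  simp only [Fsw, mul_apply, Matrix.of_apply, Matrix.one_apply, sum_conf_two, conf_two_ext_iff]
  simp [ite_and]

theorem trace_Fsw (d : ℕ) : (Fsw d).trace = d := by
  simp only [Matrix.trace, diag, Fsw, of_apply, sum_conf_two]
  simp [ite_and]

theorem Esm_mul (d : ℕ) (j k : SA) : Esm d j * Esm d k = if j = k then Esm d j else 0 := by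
  cases j <;> cases k <;> simp only [Esm, reduceCtorEq, reduceIte] <;>
    simp only [smul_mul_smul, mul_add, add_mul, mul_sub, sub_mul, mul_one, one_mul,
      Fsw_mul_self] <;>
    module

theorem EId_mul (d : ℕ) (j k : SA) : EId d j * EId d k = if j = k then EId d j else 0 := by
  rw [EId, EId, ← mul_kronecker_mul, Esm_mul, Matrix.one_mul]
  split_ifs
  · rfl
  · exact zero_kronecker _

theorem trace_Esm (d : ℕ) (j : SA) : (Esm d j).trace = mR d j := by
  cases j <;>
    simp only [Esm, mR, trace_smul, trace_add, trace_sub, trace_Fsw, trace_one, Fintype.card_fun,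
      Fintype.card_fin, smul_eq_mul] <;>
    push_cast <;> ring

theorem mR_pos (d : ℕ) (hd : 2 ≤ d) (j : SA) : 0 < mR d j := by
  have h2 : (2 : ℝ) ≤ d := by exact_mod_cast hd
  cases j <;> simp only [mR] <;> nlinarith

theorem Q2_mul_EId_mul_Q2 (d : ℕ) (hd : (d : ℂ) ≠ 0) (j : SA) :
    Q2 d * EId d j * Q2 d = ((mR d j : ℂ) / (d : ℂ) ^ 2) • Q2 d := by
  rw [Q2, V2_eq_vecMulVec d hd, smul_mul_assoc, mul_smul_comm, smul_mul_assoc,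
    vecMulVec_mul_mul_vecMulVec, EId, vec_one_dotProduct_kronecker_one_mulVec, trace_Esm,
    smul_smul, smul_smul, smul_smul]
  congr 1
  ring

/-- the operators `G^(2)_{kl}` form a system of matrix units:
`G^(2)_{ij} G^(2)_{kl} = δ_{jk} G^(2)_{il}`. -/
theorem G2_matrix_units (d : ℕ) (hd : 2 ≤ d) (i j k l : SA) :
    G2 d i j * G2 d k l = if j = k then G2 d i l else 0 := by
  have hd0 : (d : ℂ) ≠ 0 := Nat.cast_ne_zero.mpr (by omega)
  exact matrixUnits_of_compression (EId d) (Q2 d) _ (mR d) (pow_ne_zero 2 hd0) (mR_pos d hd)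
    (EId_mul d) (Q2_mul_EId_mul_Q2 d hd0) i j k l

end WBA
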